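/- arXiv:1206.3911 — 3 statements merged into one kernel-verified Lean document; each statement's English description precedes it below -/
import Mathlib

section
/- Let I, J ≥ 2 and let F be a finset of Fin I × Fin J with card F = I + J − 1. Then the family of model rows {r(p) : p ∈ F} is linearly independent over ℝ (i.e., F is a saturated fraction) if and only if no subset C ⊆ F is a k-cycle for any k ≥ 2. -/
/-- A `k`-cycle in the `I × J` design: a set of `2k` points such that exactly `k`
row levels occur as first coordinates, each in exactly two points, and exactly `k`
column levels occur as second coordinates, each in exactly two points. -/
def IsKCycle {I J : ℕ} (k : ℕ) (C : Finset (Fin I × Fin J)) : Prop :=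
  C.card = 2 * k ∧
  (C.image Prod.fst).card = k ∧
  (∀ i ∈ C.image Prod.fst, (C.filter fun p => p.1 = i).card = 2) ∧
  (C.image Prod.snd).card = k ∧
  (∀ j ∈ C.image Prod.snd, (C.filter fun p => p.2 = j).card = 2)

/-- The model row of a design point `(i, j)` under the simple effect model:
a `1` (for the grand mean), the indicators of the first `I - 1` row levels,
and the indicators of the first `J - 1` column levels. -/
def modelRow {I J : ℕ} (p : Fin I × Fin J) :
    ℝ × (Fin (I - 1) → ℝ) × (Fin (J - 1) → ℝ) :=
  (1,
   fun a => if (p.1 : ℕ) = (a : ℕ) then 1 else 0,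
   fun b => if (p.2 : ℕ) = (b : ℕ) then 1 else 0)

/-
View `F` as the edge set of a bipartite graph on the row and column levels. A relation
`∑ c p • modelRow p = 0` says exactly that `c` sums to zero along every row and every column
(the intercept recovers the levels without an indicator). Every line meeting the support of
such a `c` meets it at least twice, so the support has at least as many points as lines, and a
minimal nonempty set with this property is 2-regular, that is, a cycle. Conversely
`modelRow (i, j) = a i + b j`, so the `2k` model rows of a `k`-cycle lie in the span of the
`2k - 1` vectors `a i + b j₀` and `b j - b j₀`, and are therefore dependent.
-/

open Finset Submodule

section Fibers

variable {γ δ M : Type*} [DecidableEq δ] [AddCommMonoid M] {s : Finset γ} {f : γ → δ}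

lemma card_filter_eq_two_of_card_le_two_mul (h : ∀ y ∈ s.image f, 2 ≤ #{x ∈ s | f x = y})
    (hs : #s ≤ 2 * #(s.image f)) : ∀ y ∈ s.image f, #{x ∈ s | f x = y} = 2 := by
  by_contra! ⟨y, hy, hne⟩
  have : 2 * #(s.image f) < #s :=
    calc 2 * #(s.image f) = ∑ _y ∈ s.image f, 2 := by simp [mul_comm]
      _ < ∑ y ∈ s.image f, #{x ∈ s | f x = y} :=
        sum_lt_sum h ⟨y, hy, (h y hy).lt_of_ne' hne⟩
      _ = #s := (card_eq_sum_card_image f s).symm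
  omega

lemma card_image_erase_lt [DecidableEq γ] {p : γ} (hp : {x ∈ s | f x = f p} = {p}) :
    #((s.erase p).image f) < #(s.image f) := by
  refine card_lt_card ((ssubset_iff_of_subset (image_subset_image (erase_subset p s))).2
    ⟨f p, mem_image_of_mem f (mem_of_mem_filter p (hp ▸ mem_singleton_self p)), ?_⟩)
  intro hmem
  obtain ⟨x, hx, hfx⟩ := mem_image.1 hmem
  have : x ∈ {x ∈ s | f x = f p} := mem_filter.2 ⟨mem_of_mem_erase hx, hfx⟩
  rw [hp, mem_singleton] at this
  exact ne_of_mem_erase hx this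

lemma two_le_card_filter_of_card_image_erase [DecidableEq γ]
    (h : ∀ p ∈ s, #((s.erase p).image f) = #(s.image f)) :
    ∀ y ∈ s.image f, 2 ≤ #{x ∈ s | f x = y} := by
  intro y hy
  obtain ⟨p, hp, rfl⟩ := mem_image.1 hy
  by_contra! hlt
  have hpf : p ∈ {x ∈ s | f x = f p} := mem_filter.2 ⟨hp, rfl⟩
  have hfib : {x ∈ s | f x = f p} = {p} :=
    eq_singleton_iff_unique_mem.2 ⟨hpf, fun x hx => card_le_one.1 (by omega) x hx p hpf⟩
  exact (card_image_erase_lt hfib).ne (h p hp)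

lemma two_le_card_filter_of_sum_filter_eq_zero [DecidableEq M] {c : γ → M}
    (h : ∀ y, ∑ x ∈ s with f x = y, c x = 0) :
    ∀ y ∈ {x ∈ s | c x ≠ 0}.image f, 2 ≤ #{x ∈ {x ∈ s | c x ≠ 0} | f x = y} := by
  intro y hy
  obtain ⟨p, hp, rfl⟩ := mem_image.1 hy
  by_contra! hlt
  have hpf : p ∈ {x ∈ {x ∈ s | c x ≠ 0} | f x = f p} := mem_filter.2 ⟨hp, rfl⟩
  have hfib : {x ∈ {x ∈ s | c x ≠ 0} | f x = f p} = {p} :=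
    eq_singleton_iff_unique_mem.2 ⟨hpf, fun x hx => card_le_one.1 (by omega) x hx p hpf⟩
  have hsum : ∑ x ∈ s with f x = f p, c x = c p := by
    rw [← sum_filter_ne_zero, filter_comm, hfib, sum_singleton]
  exact (mem_filter.1 hp).2 (hsum ▸ h (f p))

lemma sum_filter_eq_zero_of_forall_ne {c : γ → M} {y₀ : δ} (hs : ∑ x ∈ s, c x = 0)
    (h : ∀ y ≠ y₀, ∑ x ∈ s with f x = y, c x = 0) :
    ∑ x ∈ s with f x = y₀, c x = 0 := by
  rw [← hs, ← sum_fiberwise_of_maps_to (g := f) (t := insert y₀ (s.image f))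
    (fun x hx => mem_insert_of_mem (mem_image_of_mem f hx)), sum_eq_single y₀]
  · exact fun y _ hy => h y hy
  · exact fun hy₀ => (hy₀ (mem_insert_self _ _)).elim

lemma sum_filter_eq_zero_of_forall_lt {n : ℕ} {g : γ → Fin n} {c : γ → M}
    (hs : ∑ x ∈ s, c x = 0) (h : ∀ a : Fin (n - 1), ∑ x ∈ s with (g x : ℕ) = a, c x = 0)
    (i : Fin n) : ∑ x ∈ s with g x = i, c x = 0 := by
  have hlt : ∀ y : Fin n, (y : ℕ) < n - 1 → ∑ x ∈ s with g x = y, c x = 0 :=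
    fun y hy => by simpa [Fin.ext_iff] using h ⟨y, hy⟩
  by_cases hi : (i : ℕ) < n - 1
  · exact hlt i hi
  · refine sum_filter_eq_zero_of_forall_ne hs fun y hy => hlt y ?_
    have := Fin.val_ne_of_ne hy
    omega

end Fibers

section Lines

variable {α β : Type*} [DecidableEq α] [DecidableEq β] {S C : Finset (α × β)}

def lineCount (S : Finset (α × β)) : ℕ := #(S.image Prod.fst) + #(S.image Prod.snd)

def IsTwoRegular (C : Finset (α × β)) : Prop :=
  (∀ i ∈ C.image Prod.fst, #{p ∈ C | p.1 = i} = 2) ∧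
    ∀ j ∈ C.image Prod.snd, #{p ∈ C | p.2 = j} = 2

lemma lineCount_erase_le (p : α × β) : lineCount (S.erase p) ≤ lineCount S :=
  add_le_add (card_le_card (image_subset_image (erase_subset p S)))
    (card_le_card (image_subset_image (erase_subset p S)))

lemma lineCount_le_card_of_two_le (hrow : ∀ i ∈ S.image Prod.fst, 2 ≤ #{p ∈ S | p.1 = i})
    (hcol : ∀ j ∈ S.image Prod.snd, 2 ≤ #{p ∈ S | p.2 = j}) : lineCount S ≤ #S := by
  have := mul_card_image_le_card S 2 hrow
  have := mul_card_image_le_card S 2 hcol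
  unfold lineCount
  omega

lemma isTwoRegular_of_forall_erase (hne : C.Nonempty) (hle : lineCount C ≤ #C)
    (hmin : ∀ p ∈ C, (C.erase p).Nonempty → #(C.erase p) < lineCount (C.erase p)) :
    IsTwoRegular C := by
  have hrow₀ := card_pos.2 (hne.image Prod.fst)
  have hcol₀ := card_pos.2 (hne.image Prod.snd)
  have herase : ∀ p ∈ C, #C ≤ lineCount (C.erase p) := fun p hp => by
    have h := card_erase_of_mem hp
    have := hmin p hp (card_pos.1 (by unfold lineCount at hle; omega))
    omega
  obtain ⟨p₀, hp₀⟩ := hne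
  have hcard : lineCount C = #C :=
    le_antisymm hle ((herase p₀ hp₀).trans (lineCount_erase_le p₀))
  have himage : ∀ p ∈ C, #((C.erase p).image Prod.fst) = #(C.image Prod.fst) ∧
      #((C.erase p).image Prod.snd) = #(C.image Prod.snd) := fun p hp => by
    have := herase p hp
    have := card_le_card (image_subset_image (f := Prod.fst) (erase_subset p C))
    have := card_le_card (image_subset_image (f := Prod.snd) (erase_subset p C))
    unfold lineCount at *
    omega
  have hrow := two_le_card_filter_of_card_image_erase fun p hp => (himage p hp).1
  have hcol := two_le_card_filter_of_card_image_erase fun p hp => (himage p hp).2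
  have := mul_card_image_le_card C 2 hrow
  have := mul_card_image_le_card C 2 hcol
  unfold lineCount at hcard
  exact ⟨card_filter_eq_two_of_card_le_two_mul hrow (by omega),
    card_filter_eq_two_of_card_le_two_mul hcol (by omega)⟩

lemma exists_isTwoRegular_subset (hS : S.Nonempty) (hle : lineCount S ≤ #S) :
    ∃ C ⊆ S, C.Nonempty ∧ IsTwoRegular C := by
  obtain ⟨C, hC, hmin⟩ := (S.powerset.filter fun C => C.Nonempty ∧ lineCount C ≤ #C)
    |>.exists_min_image card ⟨S, mem_filter.2 ⟨mem_powerset_self S, hS, hle⟩⟩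
  simp only [mem_filter, mem_powerset, and_imp] at hC hmin
  obtain ⟨hCS, hCne, hCle⟩ := hC
  refine ⟨C, hCS, hCne, isTwoRegular_of_forall_erase hCne hCle fun p hp hne => ?_⟩
  by_contra! hle'
  exact (card_erase_lt_of_mem hp).not_ge (hmin _ ((erase_subset p C).trans hCS) hne hle')

lemma exists_isTwoRegular_subset_of_sum_filter_eq_zero {M : Type*} [AddCommMonoid M]
    [DecidableEq M] {c : α × β → M} (hrow : ∀ i, ∑ p ∈ S with p.1 = i, c p = 0)
    (hcol : ∀ j, ∑ p ∈ S with p.2 = j, c p = 0) (hc : ∃ p ∈ S, c p ≠ 0) :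
    ∃ C ⊆ S, C.Nonempty ∧ IsTwoRegular C := by
  obtain ⟨p, hp, hcp⟩ := hc
  obtain ⟨C, hCS, hC⟩ := exists_isTwoRegular_subset (S := {p ∈ S | c p ≠ 0})
    ⟨p, mem_filter.2 ⟨hp, hcp⟩⟩ (lineCount_le_card_of_two_le
      (two_le_card_filter_of_sum_filter_eq_zero hrow)
      (two_le_card_filter_of_sum_filter_eq_zero hcol))
  exact ⟨C, hCS.trans (filter_subset _ S), hC⟩

lemma not_linearIndepOn_of_lineCount_le_card {R V : Type*} [Ring R] [StrongRankCondition R]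
    [AddCommGroup V] [Module R V] {v : α × β → V} {a : α → V} {b : β → V}
    (hv : ∀ p, v p = a p.1 + b p.2) (hS : S.Nonempty) (hle : lineCount S ≤ #S) :
    ¬ LinearIndepOn R v (S : Set (α × β)) := by
  classical
  have := nontrivial_of_invariantBasisNumber R
  intro hli
  obtain ⟨j₀, hj₀⟩ := hS.image Prod.snd
  set X : Finset V := (S.image Prod.fst).image (a · + b j₀) ∪
    ((S.image Prod.snd).erase j₀).image (b · - b j₀)
  have hX : #X < #S :=
    calc #X ≤ #(S.image Prod.fst) + #((S.image Prod.snd).erase j₀) :=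
          (card_union_le _ _).trans (add_le_add card_image_le card_image_le)
      _ < #S := by
        rw [card_erase_of_mem hj₀]
        unfold lineCount at hle
        have := card_pos.2 (hS.image Prod.snd)
        omega
  have hspan : Set.range (fun p : (S : Set (α × β)) => v p) ⊆ span R (X : Set V) := by
    rintro _ ⟨⟨p, hp⟩, rfl⟩
    have hrow : a p.1 + b j₀ ∈ span R X :=
      subset_span (mem_union_left _ (mem_image_of_mem _ (mem_image_of_mem _ hp)))
    change v p ∈ _
    rw [hv]
    by_cases hj : p.2 = j₀
    · rwa [hj]
    · have hcol : b p.2 - b j₀ ∈ span R X := subset_span (mem_union_right _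
        (mem_image_of_mem _ (mem_erase.2 ⟨hj, mem_image_of_mem _ hp⟩)))
      simpa using add_mem hrow hcol
  have := (finrank_span_eq_card hli).symm.le.trans
    ((Submodule.finrank_mono (span_le.2 hspan)).trans (finrank_span_finset_le_card X))
  simp only [coe_sort_coe, Fintype.card_coe] at this
  omega

end Lines

section Design

variable {I J : ℕ} {C : Finset (Fin I × Fin J)}

lemma IsKCycle.nonempty {k : ℕ} (hC : IsKCycle k C) (hk : 2 ≤ k) : C.Nonempty := by
  rw [← card_pos, hC.1]
  omega

lemma IsKCycle.lineCount_le_card {k : ℕ} (hC : IsKCycle k C) : lineCount C ≤ #C := by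
  obtain ⟨hcard, hrow, -, hcol, -⟩ := hC
  unfold lineCount
  omega

lemma IsTwoRegular.exists_isKCycle (hC : IsTwoRegular C) (hne : C.Nonempty) :
    ∃ k, 2 ≤ k ∧ IsKCycle k C := by
  have hrow : #C = 2 * #(C.image Prod.fst) := by
    rw [card_eq_sum_card_image Prod.fst C, sum_congr rfl hC.1, sum_const, smul_eq_mul, mul_comm]
  have hcol : #C = 2 * #(C.image Prod.snd) := by
    rw [card_eq_sum_card_image Prod.snd C, sum_congr rfl hC.2, sum_const, smul_eq_mul, mul_comm]
  have hpos := card_pos.2 (hne.image Prod.fst)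
  -- a `k`-cycle lies in a `k × k` grid, and `2k ≤ k * k` forces `k ≥ 2`
  have hgrid : #C ≤ #(C.image Prod.fst) * #(C.image Prod.snd) :=
    (card_le_card subset_product).trans (card_product _ _).le
  refine ⟨_, ?_, hrow, rfl, hC.1, by omega, hC.2⟩
  nlinarith

lemma exists_modelRow_eq_add :
    ∃ (a : Fin I → ℝ × (Fin (I - 1) → ℝ) × (Fin (J - 1) → ℝ))
      (b : Fin J → ℝ × (Fin (I - 1) → ℝ) × (Fin (J - 1) → ℝ)),
      ∀ p, modelRow p = a p.1 + b p.2 :=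
  ⟨fun i => (1, fun a => if (i : ℕ) = a then 1 else 0, 0),
    fun j => (0, 0, fun b => if (j : ℕ) = b then 1 else 0),
    fun p => by ext <;> simp [modelRow]⟩

lemma sum_filter_eq_zero_of_sum_smul_modelRow_eq_zero {F : Finset (Fin I × Fin J)}
    {c : Fin I × Fin J → ℝ} (hc : ∑ p ∈ F, c p • modelRow p = 0) :
    (∀ i, ∑ p ∈ F with p.1 = i, c p = 0) ∧ ∀ j, ∑ p ∈ F with p.2 = j, c p = 0 := by
  have hsum : ∑ p ∈ F, c p = 0 := by simpa [modelRow, Prod.fst_sum] using congrArg Prod.fst hc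
  refine ⟨sum_filter_eq_zero_of_forall_lt hsum fun a => ?_,
    sum_filter_eq_zero_of_forall_lt hsum fun b => ?_⟩
  · simpa [modelRow, sum_filter, Prod.fst_sum, Prod.snd_sum, Finset.sum_apply]
      using congrFun (congrArg (·.2.1) hc) a
  · simpa [modelRow, sum_filter, Prod.snd_sum, Finset.sum_apply]
      using congrFun (congrArg (·.2.2) hc) b

end Design

theorem saturated_iff_no_cycle_general {I J : ℕ} (F : Finset (Fin I × Fin J)) :
    LinearIndependent ℝ (fun p : F => modelRow p.1) ↔
      ¬ ∃ k, 2 ≤ k ∧ ∃ C ⊆ F, IsKCycle k C := by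
  change LinearIndepOn ℝ modelRow (F : Set (Fin I × Fin J)) ↔ _
  constructor
  · rintro hF ⟨k, hk, C, hCF, hC⟩
    obtain ⟨a, b, hab⟩ := exists_modelRow_eq_add
    exact not_linearIndepOn_of_lineCount_le_card hab (hC.nonempty hk) hC.lineCount_le_card
      (hF.mono (coe_subset.2 hCF))
  · intro hno
    rw [linearIndepOn_finset_iff]
    intro c hc p hp
    by_contra hcp
    obtain ⟨hrow, hcol⟩ := sum_filter_eq_zero_of_sum_smul_modelRow_eq_zero hc
    obtain ⟨C, hCF, hne, hC⟩ :=
      exists_isTwoRegular_subset_of_sum_filter_eq_zero hrow hcol ⟨p, hp, hcp⟩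
    obtain ⟨k, hk, hkC⟩ := hC.exists_isKCycle hne
    exact hno ⟨k, hk, C, hCF, hkC⟩

/-- A fraction `F` of the `I × J` design with `I + J - 1` points is saturated
(its model rows are linearly independent over `ℝ`) if and only if no subset of `F`
is a `k`-cycle for any `k ≥ 2`. -/
theorem saturated_iff_no_cycle {I J : ℕ} (hI : 2 ≤ I) (hJ : 2 ≤ J)
    (F : Finset (Fin I × Fin J)) (hcard : F.card = I + J - 1) :
    LinearIndependent ℝ (fun p : F => modelRow p.1) ↔
      ¬ ∃ k, 2 ≤ k ∧ ∃ C ⊆ F, IsKCycle k C :=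
  saturated_iff_no_cycle_general F
end

section
/- Let I ≥ 2 and let F be a saturated fraction of the I × I design (a finset F of Fin I × Fin I with card F = 2I − 1 whose model rows are linearly independent over ℝ). Then there exist i ∈ Fin I and j ∈ Fin I such that m_A(i) = 1 and m_B(j) = 1. -/
/-!
Every level `i` of either factor occurs in a saturated fraction `F`: the indicator of level `i`
is a linear functional of the model row, and if no point of `F` had that level, the functional
would vanish on the model rows of `F`, which span the whole `(2I - 1)`-dimensional model space,
although it takes the value `1` at the model row of `(i, i)`. So all `I` row margins are
positive, and since they add up to `2I - 1 < 2I`, one of them equals `1`; likewise for columns.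
-/

open Module

section LevelIndicator

variable {R : Type*} [Ring R] {n : ℕ}

/-- The last level has no indicator coordinate of its own: its indicator is the intercept minus
all the others. -/
noncomputable def levelIndicator (i : Fin n) : (R × (Fin (n - 1) → R)) →ₗ[R] R :=
  if h : (i : ℕ) < n - 1 then (LinearMap.proj ⟨i, h⟩).comp (LinearMap.snd R R _)
  else LinearMap.fst R R _ - ∑ a, (LinearMap.proj a).comp (LinearMap.snd R R _)

theorem levelIndicator_apply_one_indicator (i k : Fin n) :
    levelIndicator i ((1 : R), fun a : Fin (n - 1) => if (k : ℕ) = a then 1 else 0) =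
      if k = i then 1 else 0 := by
  by_cases hi : (i : ℕ) < n - 1
  · simp [levelIndicator, hi, Fin.ext_iff]
  · have hk : (k : ℕ) < n - 1 ↔ k ≠ i := by rw [Fin.ne_iff_vne]; omega
    have hsum : ∑ a : Fin (n - 1), (if (k : ℕ) = a then (1 : R) else 0) =
        if k ≠ i then 1 else 0 := by
      rw [Fin.sum_univ_eq_sum_range (fun a => if (k : ℕ) = a then (1 : R) else 0),
        Finset.sum_ite_eq]
      simp only [Finset.mem_range, hk]
    simp only [levelIndicator, dif_neg hi, LinearMap.sub_apply, LinearMap.fst_apply,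
      LinearMap.sum_apply, LinearMap.comp_apply, LinearMap.snd_apply,
      LinearMap.proj_apply, hsum]
    by_cases hki : k = i <;> simp [hki]

end LevelIndicator

section ModelRow

variable {I J : ℕ}

noncomputable def rowIndicator (i : Fin I) :
    (ℝ × (Fin (I - 1) → ℝ) × (Fin (J - 1) → ℝ)) →ₗ[ℝ] ℝ :=
  levelIndicator i ∘ₗ (LinearMap.fst ℝ ℝ _).prod (LinearMap.fst ℝ _ _ ∘ₗ LinearMap.snd ℝ ℝ _)

noncomputable def colIndicator (j : Fin J) :
    (ℝ × (Fin (I - 1) → ℝ) × (Fin (J - 1) → ℝ)) →ₗ[ℝ] ℝ :=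
  levelIndicator j ∘ₗ (LinearMap.fst ℝ ℝ _).prod (LinearMap.snd ℝ _ _ ∘ₗ LinearMap.snd ℝ ℝ _)

theorem rowIndicator_modelRow (i : Fin I) (p : Fin I × Fin J) :
    rowIndicator i (modelRow p) = if p.1 = i then 1 else 0 :=
  levelIndicator_apply_one_indicator i p.1

theorem colIndicator_modelRow (j : Fin J) (p : Fin I × Fin J) :
    colIndicator j (modelRow p) = if p.2 = j then 1 else 0 :=
  levelIndicator_apply_one_indicator j p.2

theorem finrank_modelSpace :
    finrank ℝ (ℝ × (Fin (I - 1) → ℝ) × (Fin (J - 1) → ℝ)) = 1 + (I - 1) + (J - 1) := by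
  simp [Module.finrank_prod, add_assoc]

/-- The model rows of a saturated fraction span the model space. -/
theorem apply_modelRow_eq_zero_of_saturated {F : Finset (Fin I × Fin J)}
    (hcard : F.card = 1 + (I - 1) + (J - 1))
    (hsat : LinearIndependent ℝ (fun p : F => modelRow p.1))
    (φ : (ℝ × (Fin (I - 1) → ℝ) × (Fin (J - 1) → ℝ)) →ₗ[ℝ] ℝ)
    (hφ : ∀ p ∈ F, φ (modelRow p) = 0) (p : Fin I × Fin J) : φ (modelRow p) = 0 := by
  have hspan := hsat.span_eq_top_of_card_eq_finrank'
    (by rw [Fintype.card_coe, hcard, finrank_modelSpace])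
  rw [LinearMap.ext_on_range hspan (g := 0) fun q => hφ q.1 q.2]
  rfl

theorem exists_mem_fst_eq_of_saturated {F : Finset (Fin I × Fin J)}
    (hcard : F.card = 1 + (I - 1) + (J - 1))
    (hsat : LinearIndependent ℝ (fun p : F => modelRow p.1)) (i : Fin I) (j : Fin J) :
    ∃ p ∈ F, p.1 = i := by
  by_contra! hF
  have := apply_modelRow_eq_zero_of_saturated hcard hsat (rowIndicator i)
    (fun p hp => by simp [rowIndicator_modelRow, hF p hp]) (i, j)
  simp [rowIndicator_modelRow] at this

theorem exists_mem_snd_eq_of_saturated {F : Finset (Fin I × Fin J)}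
    (hcard : F.card = 1 + (I - 1) + (J - 1))
    (hsat : LinearIndependent ℝ (fun p : F => modelRow p.1)) (i : Fin I) (j : Fin J) :
    ∃ p ∈ F, p.2 = j := by
  by_contra! hF
  have := apply_modelRow_eq_zero_of_saturated hcard hsat (colIndicator j)
    (fun p hp => by simp [colIndicator_modelRow, hF p hp]) (i, j)
  simp [colIndicator_modelRow] at this

end ModelRow

theorem Finset.exists_card_fiber_eq_one {α ι : Type*} [Fintype ι] [DecidableEq ι]
    (s : Finset α) (g : α → ι) (hcard : s.card < 2 * Fintype.card ι)
    (hfiber : ∀ i, ∃ a ∈ s, g a = i) : ∃ i, (s.filter fun a => g a = i).card = 1 := by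
  by_contra! hne
  have htwo : ∀ i ∈ (Finset.univ : Finset ι), 2 ≤ (s.filter fun a => g a = i).card := by
    intro i _
    obtain ⟨a, ha, hai⟩ := hfiber i
    have := (s.filter fun a => g a = i).card_pos.2 ⟨a, Finset.mem_filter.2 ⟨ha, hai⟩⟩
    have := hne i
    omega
  have hsum : s.card = ∑ i, (s.filter fun a => g a = i).card :=
    Finset.card_eq_sum_card_fiberwise fun a _ => Finset.mem_univ (g a)
  have := Finset.card_nsmul_le_sum _ _ _ htwo
  rw [← hsum, Finset.card_univ, smul_eq_mul] at this
  omega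

/-- A saturated fraction of the `I × I` design has a row margin equal to `1`
and a column margin equal to `1`. -/
theorem exists_margin_one_of_saturated {I : ℕ} (hI : 2 ≤ I) (F : Finset (Fin I × Fin I))
    (hcard : F.card = 2 * I - 1)
    (hsat : LinearIndependent ℝ (fun p : F => modelRow p.1)) :
    (∃ i : Fin I, (F.filter fun p => p.1 = i).card = 1) ∧
    (∃ j : Fin I, (F.filter fun p => p.2 = j).card = 1) := by
  have hcard' : F.card = 1 + (I - 1) + (I - 1) := by omega
  have hlt : F.card < 2 * Fintype.card (Fin I) := by rw [Fintype.card_fin]; omega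
  exact ⟨F.exists_card_fiber_eq_one Prod.fst hlt
      fun i => exists_mem_fst_eq_of_saturated hcard' hsat i i,
    F.exists_card_fiber_eq_one Prod.snd hlt
      fun j => exists_mem_snd_eq_of_saturated hcard' hsat j j⟩
end

section
/- The probability that a uniformly random finset F of Fin I × Fin J with card F = I + J − 1 is a saturated fraction equals I^{J−1} · J^{I−1} / C(I·J, I+J−1), and this quantity tends to 0 as I and J tend to infinity; precisely, the function (I, J) ↦ (I^{J−1} · J^{I−1} : ℝ) / C(I·J, I+J−1) on ℕ × ℕ tends to 0 along the product filter atTop ×ˢ atTop. -/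
open Filter

open Finset

namespace Matrix

section CauchyBinet

variable {m n R : Type*} [Fintype m] [Fintype n] [DecidableEq m] [CommRing R]

theorem det_mul_eq_sum_prod_mul_det_submatrix (A : Matrix m n R) (B : Matrix n m R) :
    (A * B).det = ∑ φ : m → n, (∏ i, A i (φ i)) * (B.submatrix φ id).det := by
  have hrows : A * B = fun i => ∑ k, A i k • B k := by
    ext i j
    simp [mul_apply]
  calc (A * B).det = detRowAlternating (fun i => ∑ k, A i k • B k) := by rw [hrows]; rfl
    _ = _ := by
      rw [← AlternatingMap.coe_multilinearMap, MultilinearMap.map_sum]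
      simp only [MultilinearMap.map_smul_univ, smul_eq_mul]
      rfl

/-- The Cauchy–Binet formula. -/
theorem det_mul_eq_sum_powersetCard [DecidableEq n] (A : Matrix m n R) (B : Matrix n m R) :
    (A * B).det = ∑ s ∈ (univ : Finset n).powersetCard (Fintype.card m),
      (A.submatrix id ((↑) : s → n) * B.submatrix ((↑) : s → n) id).det := by
  set g : (m → n) → R := fun φ => (∏ i, A i (φ i)) * (B.submatrix φ id).det
  have hg : ∀ φ, g φ ≠ 0 → φ.Injective := fun φ hφ => by
    by_contra hinj
    obtain ⟨i, j, hij, hne⟩ := Function.not_injective_iff.mp hinj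
    have hdet : (B.submatrix φ id).det = 0 :=
      det_zero_of_row_eq hne (funext fun k => by simp [hij])
    exact hφ (by simp [g, hdet])
  -- a term `g φ` with `φ : m → s` is nonzero only if `φ` is injective, hence onto `s`
  have hfiber : ∀ s ∈ (univ : Finset n).powersetCard (Fintype.card m),
      (A.submatrix id ((↑) : s → n) * B.submatrix ((↑) : s → n) id).det =
        ∑ φ, if univ.image φ = s then g φ else 0 := by
    intro s hs
    rw [mem_powersetCard_univ] at hs
    rw [det_mul_eq_sum_prod_mul_det_submatrix, ← sum_filter]
    refine sum_bij_ne_zero (fun ψ _ _ => (Subtype.val ∘ ψ : m → n)) (fun ψ _ hψ => ?_)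
      (fun ψ _ _ ψ' _ _ h => funext fun i => Subtype.ext (congrFun h i))
      (fun φ hφ hgφ => ?_) (fun _ _ _ => rfl)
    · have hinj : ((↑) ∘ ψ : m → n).Injective := hg _ hψ
      refine mem_filter.mpr ⟨mem_univ _, eq_of_subset_of_card_le ?_ ?_⟩
      · intro x hx
        obtain ⟨i, -, rfl⟩ := mem_image.mp hx
        exact (ψ i).2
      · rw [hs, card_image_of_injective _ hinj, card_univ]
    · have hφs : ∀ i, φ i ∈ s := fun i =>
        (mem_filter.mp hφ).2 ▸ mem_image_of_mem φ (mem_univ i)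
      exact ⟨fun i => ⟨φ i, hφs i⟩, mem_univ _, hgφ, rfl⟩
  rw [det_mul_eq_sum_prod_mul_det_submatrix, sum_congr rfl hfiber, sum_comm]
  refine sum_congr rfl fun φ _ => ?_
  rw [sum_ite_eq]
  split_ifs with h
  · rfl
  · by_contra hφ
    exact h (mem_powersetCard_univ.mpr (by rw [card_image_of_injective _ (hg φ hφ), card_univ]))

end CauchyBinet

section TotallyUnimodular

variable {m n n₁ n₂ R : Type*} [CommRing R]

theorem det_eq_zero_of_mulVec_eq_zero [Fintype n] [DecidableEq n] {M : Matrix n n R}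
    {v : n → R} (hv : M *ᵥ v = 0) {j : n} (hj : IsUnit (v j)) : M.det = 0 := by
  have h := congrArg (M.adjugate *ᵥ ·) hv
  simp only [mulVec_mulVec, adjugate_mul, smul_mulVec, one_mulVec, mulVec_zero] at h
  exact hj.mul_left_eq_zero.mp (congrFun h j)

theorem exists_det_eq_of_row_subsingleton {k : ℕ} (M : Matrix (Fin (k + 1)) (Fin (k + 1)) R)
    (r : Fin (k + 1)) (hr : ∀ c c', M r c ≠ 0 → M r c' ≠ 0 → c = c') :
    ∃ c : Fin (k + 1),
      M.det = (-1) ^ (r + c : ℕ) * M r c * (M.submatrix r.succAbove c.succAbove).det := by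
  by_cases h : ∃ c, M r c ≠ 0
  · obtain ⟨c, hc⟩ := h
    refine ⟨c, (det_succ_row M r).trans (Fintype.sum_eq_single c fun c' hc' => ?_)⟩
    have : M r c' = 0 := by_contra fun h' => hc' (hr c' c h' hc)
    simp [this]
  · push Not at h
    exact ⟨0, by rw [det_eq_zero_of_row_eq_zero r h, h 0]; ring⟩

/-- For instance the edge–vertex incidence matrix of a bipartite graph. -/
theorem isTotallyUnimodular_of_isLeft_eq {X : Matrix m (n₁ ⊕ n₂) R}
    (h01 : ∀ i j, X i j = 0 ∨ X i j = 1)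
    (hX : ∀ i j j', X i j ≠ 0 → X i j' ≠ 0 → j.isLeft = j'.isLeft → j = j') :
    X.IsTotallyUnimodular := by
  intro k
  induction k with
  | zero => exact fun _ _ _ _ => ⟨1, by simp⟩
  | succ k ih =>
    intro f g hf hg
    by_cases hrow : ∃ r, ∀ c c', X (f r) (g c) ≠ 0 → X (f r) (g c') ≠ 0 → c = c'
    · obtain ⟨r, hr⟩ := hrow
      obtain ⟨c, hc⟩ := exists_det_eq_of_row_subsingleton (X.submatrix f g) r hr
      obtain ⟨s, hs⟩ := ih _ _ (hf.comp r.succAbove_right_injective)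
        (hg.comp c.succAbove_right_injective)
      obtain ⟨t, ht⟩ : X (f r) (g c) ∈ Set.range SignType.cast := by
        rcases h01 (f r) (g c) with h | h
        · exact ⟨0, by simp [h]⟩
        · exact ⟨1, by simp [h]⟩
      refine ⟨(-1) ^ (r + c : ℕ) * t * s, ?_⟩
      rw [hc]
      simp [ht, hs]
    · push Not at hrow
      -- every row meets both blocks, so the columns of the first block minus those of the
      -- second sum to zero
      refine ⟨0, Eq.symm <| det_eq_zero_of_mulVec_eq_zero
        (v := fun c => if (g c).isLeft then 1 else -1) (j := 0) ?_ (by split_ifs <;> simp)⟩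
      funext r
      obtain ⟨c, c', hc, hc', hcc'⟩ := hrow r
      have hside : (g c).isLeft ≠ (g c').isLeft := fun h => hcc' (hg (hX _ _ _ hc hc' h))
      have hone : ∀ x, X (f r) (g x) ≠ 0 → X (f r) (g x) = 1 := fun x hx =>
        (h01 _ _).resolve_left hx
      rw [mulVec, dotProduct, Fintype.sum_eq_add c c' hcc' fun x hx => ?_]
      · simp only [submatrix_apply, hone c hc, hone c' hc', Pi.zero_apply]
        revert hside
        cases (g c).isLeft <;> cases (g c').isLeft <;> simp
      · by_contra hne
        have hx0 : X (f r) (g x) ≠ 0 := left_ne_zero_of_mul hne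
        have : (g x).isLeft = (g c).isLeft ∨ (g x).isLeft = (g c').isLeft := by
          revert hside
          cases (g x).isLeft <;> cases (g c).isLeft <;> cases (g c').isLeft <;> simp
        rcases this with h | h
        · exact hx.1 (hg (hX _ _ _ hx0 hc h))
        · exact hx.2 (hg (hX _ _ _ hx0 hc' h))

theorem det_transpose_mul_self_eq_ite_of_isTotallyUnimodular {K : Type*} [Field K]
    [Fintype m] [Fintype n] [DecidableEq m] {M : Matrix n m K}
    (hM : M.IsTotallyUnimodular) (hcard : Fintype.card n = Fintype.card m)
    [Decidable (LinearIndependent K M.row)] :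
    (Mᵀ * M).det = if LinearIndependent K M.row then 1 else 0 := by
  let e : m ≃ n := Fintype.equivOfCardEq hcard.symm
  have hsq : (Mᵀ * M).det = (M.submatrix e id).det ^ 2 := by
    rw [← submatrix_id_id (Mᵀ * M), ← submatrix_mul_equiv Mᵀ M id e id, ← transpose_submatrix,
      det_mul, det_transpose, sq]
  have hli : LinearIndependent K M.row ↔ (M.submatrix e id).det ≠ 0 := by
    rw [← linearIndependent_equiv e, ← isUnit_iff_ne_zero, ← isUnit_iff_isUnit_det,
      ← linearIndependent_rows_iff_isUnit]
    rfl
  obtain ⟨σ, hσ⟩ := (isTotallyUnimodular_iff_fintype M).mp hM m e id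
  rw [hsq, ← hσ]
  rw [← hσ] at hli
  cases σ <;> simp at hli ⊢ <;> simp [hli]

end TotallyUnimodular

theorem det_one_add_smul_of_one {n R : Type*} [Fintype n] [DecidableEq n] [CommRing R] (c : R) :
    (1 + c • of fun _ _ => (1 : R) : Matrix n n R).det = 1 + Fintype.card n * c := by
  have : c • (of fun _ _ => (1 : R) : Matrix n n R) =
      replicateCol Unit (fun _ => c) * replicateRow Unit (fun _ => (1 : R)) := by
    ext
    simp [replicateCol, replicateRow, mul_apply]
  rw [this, det_one_add_replicateCol_mul_replicateRow]
  simp [dotProduct]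

end Matrix

open Matrix

/-- Unlike the model rows, this uses all `I` row indicators instead of the grand mean, which makes
it totally unimodular without changing which sets of rows are linearly independent. -/
def designMatrix (I J : ℕ) : Matrix (Fin I × Fin J) (Fin I ⊕ Fin (J - 1)) ℝ :=
  fromCols (of fun p a => if p.1 = a then 1 else 0)
    (of fun p b => if p.2 = Fin.castLE (J.sub_le 1) b then 1 else 0)

theorem isTotallyUnimodular_designMatrix (I J : ℕ) : (designMatrix I J).IsTotallyUnimodular := by
  refine isTotallyUnimodular_of_isLeft_eq (fun p j => ?_) (fun p j j' hj hj' hside => ?_)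
  · rcases j with a | b <;> simp [designMatrix, em']
  · rcases j with a | b <;> rcases j' with a' | b' <;>
      simp_all [designMatrix, Fin.castLE_injective _ |>.eq_iff]

theorem transpose_designMatrix_mul_self (I J : ℕ) :
    (designMatrix I J)ᵀ * designMatrix I J =
      fromBlocks ((J : ℝ) • 1) (of fun _ _ => 1) (of fun _ _ => 1) ((I : ℝ) • 1) := by
  rw [designMatrix, transpose_fromCols, fromRows_mul_fromCols]
  congr 1 <;> ext <;> simp [mul_apply, Fintype.sum_prod_type, one_apply, eq_comm]
  split_ifs <;> simp

theorem det_transpose_designMatrix_mul_self {I J : ℕ} (hI : 0 < I) (hJ : 0 < J) :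
    ((designMatrix I J)ᵀ * designMatrix I J).det = (I : ℝ) ^ (J - 1) * (J : ℝ) ^ (I - 1) := by
  have hJ0 : (J : ℝ) ≠ 0 := by positivity
  let _ : Invertible ((J : ℝ) • (1 : Matrix (Fin I) (Fin I) ℝ)) :=
    ⟨(J : ℝ)⁻¹ • 1, by simp [hJ0], by simp [hJ0]⟩
  have hinv : ⅟((J : ℝ) • (1 : Matrix (Fin I) (Fin I) ℝ)) = (J : ℝ)⁻¹ • 1 := rfl
  have hschur : (I : ℝ) • (1 : Matrix (Fin (J - 1)) (Fin (J - 1)) ℝ) -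
      (of fun _ _ => 1 : Matrix (Fin (J - 1)) (Fin I) ℝ) *
        ⅟((J : ℝ) • (1 : Matrix (Fin I) (Fin I) ℝ)) *
        (of fun _ _ => 1 : Matrix (Fin I) (Fin (J - 1)) ℝ) =
      (I : ℝ) • (1 + (-(J : ℝ)⁻¹) • of fun _ _ => (1 : ℝ)) := by
    ext
    simp [hinv, mul_apply, one_apply]
    split_ifs <;> field_simp <;> ring
  have hpow : (J : ℝ) ^ I = J ^ (I - 1) * J := by rw [← pow_succ, Nat.sub_add_cancel hI]
  rw [transpose_designMatrix_mul_self, det_fromBlocks₁₁, hschur, det_smul, det_smul,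
    det_one_add_smul_of_one, det_one, Fintype.card_fin, Fintype.card_fin, Nat.cast_sub hJ, hpow]
  field_simp
  ring

def modelMap (I J : ℕ) :
    (Fin I ⊕ Fin (J - 1) → ℝ) →ₗ[ℝ] ℝ × (Fin (I - 1) → ℝ) × (Fin (J - 1) → ℝ) :=
  LinearMap.prod (∑ a, LinearMap.proj (R := ℝ) (φ := fun _ => ℝ) (Sum.inl a))
    ((LinearMap.funLeft ℝ ℝ (Sum.inl ∘ Fin.castLE (I.sub_le 1))).prod
      (LinearMap.funLeft ℝ ℝ Sum.inr))

theorem modelMap_designMatrix {I J : ℕ} (p : Fin I × Fin J) :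
    modelMap I J (designMatrix I J p) = modelRow p := by
  ext <;> simp [modelMap, designMatrix, modelRow] <;> simp [Fin.ext_iff]

theorem ker_modelMap (I J : ℕ) : LinearMap.ker (modelMap I J) = ⊥ := by
  rw [LinearMap.ker_eq_bot']
  intro v hv
  have hsum : ∑ a, v (Sum.inl a) = 0 := by simpa [modelMap] using congrArg Prod.fst hv
  have hlow : ∀ a : Fin I, (a : ℕ) < I - 1 → v (Sum.inl a) = 0 := fun a ha =>
    congrFun (congrArg (·.2.1) hv) ⟨a, ha⟩
  funext c
  rcases c with a | b
  · by_cases ha : (a : ℕ) < I - 1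
    · exact hlow a ha
    -- the last row level is recovered from the sum over all of them
    rwa [sum_eq_single a (fun a' _ ha' => hlow a' (by have := Fin.val_ne_of_ne ha'; omega))
      (by simp)] at hsum
  · exact congrFun (congrArg (·.2.2) hv) b

theorem linearIndependent_modelRow_iff {I J : ℕ} (F : Finset (Fin I × Fin J)) :
    LinearIndependent ℝ (fun p : F => modelRow p.1) ↔
      LinearIndependent ℝ ((designMatrix I J).submatrix ((↑) : F → Fin I × Fin J) id).row := by
  rw [← LinearMap.linearIndependent_iff _ (ker_modelMap I J)]
  simp only [← modelMap_designMatrix]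
  rfl

theorem natCard_saturated {I J : ℕ} (hI : 0 < I) (hJ : 0 < J) :
    (Nat.card {F : Finset (Fin I × Fin J) //
        F.card = I + J - 1 ∧ LinearIndependent ℝ (fun p : F => modelRow p.1)} : ℝ) =
      (I : ℝ) ^ (J - 1) * (J : ℝ) ^ (I - 1) := by
  classical
  have hcols : Fintype.card (Fin I ⊕ Fin (J - 1)) = I + J - 1 := by
    simp only [Fintype.card_sum, Fintype.card_fin]
    omega
  rw [Nat.card_eq_fintype_card, Fintype.card_subtype, ← det_transpose_designMatrix_mul_self hI hJ,
    det_mul_eq_sum_powersetCard, hcols, powersetCard_eq_filter, powerset_univ, ← filter_filter,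
    natCast_card_filter]
  refine sum_congr rfl fun F hF => ?_
  have hF : Fintype.card F = Fintype.card (Fin I ⊕ Fin (J - 1)) := by
    simpa [hcols] using (mem_filter.mp hF).2
  rw [← transpose_submatrix, det_transpose_mul_self_eq_ite_of_isTotallyUnimodular
    ((isTotallyUnimodular_designMatrix I J).submatrix _ _) hF]
  exact if_congr (linearIndependent_modelRow_iff F) rfl rfl

open Real Nat

theorem factorial_mul_exp_one_pow_le {n : ℕ} (hn : n ≠ 0) :
    (n ! : ℝ) * exp 1 ^ n ≤ exp 1 * √n * n ^ n := by
  have h : Stirling.stirlingSeq n ≤ exp 1 / √2 := by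
    simpa [Nat.sub_add_cancel (Nat.pos_of_ne_zero hn), Stirling.stirlingSeq_one] using
      Stirling.stirlingSeq'_antitone (Nat.zero_le (n - 1))
  rw [Stirling.stirlingSeq, div_le_div_iff₀ (by positivity) (by positivity), div_pow,
    Real.sqrt_mul zero_le_two] at h
  field_simp at h
  exact h

theorem pow_le_choose_mul_factorial (a b : ℕ) :
    ((a : ℝ) * b) ^ (a + b + 1) ≤ ((a + 1) * (b + 1)).choose (a + b + 1) * (a + b + 1)! := by
  have h := Nat.pow_le_choose (α := ℝ) (a + b + 1) ((a + 1) * (b + 1))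
  rw [div_le_iff₀ (by positivity)] at h
  have hsub : (a + 1) * (b + 1) + 1 - (a + b + 1) = a * b + 1 := by
    rw [Nat.sub_eq_iff_eq_add (by nlinarith)]
    ring
  rw [hsub] at h
  refine le_trans (pow_le_pow_left₀ (by positivity) ?_ _) h
  push_cast
  linarith

theorem factorial_add_add_one_le (a b : ℕ) :
    (a + b + 1)! ≤ (a + b + 1) * 2 ^ (a + b) * a ! * b ! := by
  rw [Nat.factorial_succ, ← Nat.add_choose_mul_factorial_mul_factorial]
  simp only [mul_assoc]
  gcongr
  exact Nat.choose_le_two_pow _ _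

theorem add_one_pow_mul_factorial_mul_le {a : ℕ} (ha : 4 ≤ a) (b : ℕ) :
    (a + 1 : ℝ) ^ b * a ! * exp 1 ^ a ≤ exp 1 * (5 / 4) ^ b * a ^ (a + b + 1) := by
  have ha' : (4 : ℝ) ≤ a := by exact_mod_cast ha
  have hpow : (a + 1 : ℝ) ^ b ≤ (5 / 4) ^ b * a ^ b := by
    rw [← mul_pow]
    exact pow_le_pow_left₀ (by positivity) (by linarith) b
  have hsqrt : √(a : ℝ) ≤ a := Real.sqrt_le_self_iff.mpr (Or.inr (by linarith))
  calc (a + 1 : ℝ) ^ b * a ! * exp 1 ^ a = (a + 1 : ℝ) ^ b * (a ! * exp 1 ^ a) := by ring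
    _ ≤ ((5 / 4) ^ b * a ^ b) * (exp 1 * √a * a ^ a) :=
        mul_le_mul hpow (factorial_mul_exp_one_pow_le (by omega)) (by positivity) (by positivity)
    _ ≤ ((5 / 4) ^ b * a ^ b) * (exp 1 * a * a ^ a) := by gcongr
    _ = exp 1 * (5 / 4) ^ b * a ^ (a + b + 1) := by ring

theorem pow_mul_pow_mul_factorial_mul_le {a b : ℕ} (ha : 4 ≤ a) (hb : 4 ≤ b) :
    (a + 1 : ℝ) ^ b * (b + 1) ^ a * (a + b + 1)! * exp 1 ^ (a + b) ≤
      exp 1 ^ 2 * (a + b + 1) * (5 / 2) ^ (a + b) * (a * b) ^ (a + b + 1) := by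
  have hfac : ((a + b + 1)! : ℝ) ≤ (a + b + 1) * 2 ^ (a + b) * a ! * b ! := by
    exact_mod_cast factorial_add_add_one_le a b
  calc (a + 1 : ℝ) ^ b * (b + 1) ^ a * (a + b + 1)! * exp 1 ^ (a + b)
      ≤ (a + 1 : ℝ) ^ b * (b + 1) ^ a * ((a + b + 1) * 2 ^ (a + b) * a ! * b !) *
        exp 1 ^ (a + b) := by gcongr
    _ = (a + b + 1) * 2 ^ (a + b) *
        (((a + 1 : ℝ) ^ b * a ! * exp 1 ^ a) * ((b + 1 : ℝ) ^ a * b ! * exp 1 ^ b)) := by ring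
    _ ≤ (a + b + 1) * 2 ^ (a + b) *
        ((exp 1 * (5 / 4) ^ b * a ^ (a + b + 1)) * (exp 1 * (5 / 4) ^ a * b ^ (b + a + 1))) := by
      gcongr ?_ * ?_
      exact mul_le_mul (add_one_pow_mul_factorial_mul_le ha b)
        (add_one_pow_mul_factorial_mul_le hb a) (by positivity) (by positivity)
    _ = _ := by
      rw [show (5 / 2 : ℝ) = 5 / 4 * 2 by norm_num, mul_pow]
      ring

theorem pow_mul_pow_div_choose_le {a b : ℕ} (ha : 4 ≤ a) (hb : 4 ≤ b) :
    ((a + 1 : ℝ) ^ b * (b + 1) ^ a) / ((a + 1) * (b + 1)).choose (a + b + 1) ≤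
      exp 1 ^ 2 * (a + b + 1) * (5 / (2 * exp 1)) ^ (a + b) := by
  have hC := pow_le_choose_mul_factorial a b
  have hCpos : (0 : ℝ) < ((a + 1) * (b + 1)).choose (a + b + 1) := by
    exact_mod_cast Nat.choose_pos (by nlinarith)
  set C : ℝ := (((a + 1) * (b + 1)).choose (a + b + 1) : ℝ)
  have hkey : (a + 1 : ℝ) ^ b * (b + 1) ^ a * exp 1 ^ (a + b) ≤
      exp 1 ^ 2 * (a + b + 1) * (5 / 2) ^ (a + b) * C := by
    refine le_of_mul_le_mul_right ?_ (by positivity : (0 : ℝ) < (a + b + 1)!)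
    calc (a + 1 : ℝ) ^ b * (b + 1) ^ a * exp 1 ^ (a + b) * (a + b + 1)!
        = (a + 1 : ℝ) ^ b * (b + 1) ^ a * (a + b + 1)! * exp 1 ^ (a + b) := by ring
      _ ≤ exp 1 ^ 2 * (a + b + 1) * (5 / 2) ^ (a + b) * (a * b) ^ (a + b + 1) :=
        pow_mul_pow_mul_factorial_mul_le ha hb
      _ ≤ exp 1 ^ 2 * (a + b + 1) * (5 / 2) ^ (a + b) * (C * (a + b + 1)!) := by gcongr
      _ = _ := by ring
  have hq : (5 / (2 * exp 1)) ^ (a + b) * exp 1 ^ (a + b) = (5 / 2) ^ (a + b) := by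
    rw [← mul_pow]
    field_simp
  rw [div_le_iff₀ hCpos]
  refine le_of_mul_le_mul_right (hkey.trans_eq ?_) (by positivity : (0 : ℝ) < exp 1 ^ (a + b))
  rw [← hq]
  ring

theorem tendsto_pow_mul_pow_div_choose :
    Tendsto (fun p : ℕ × ℕ =>
        ((p.1 : ℝ) ^ (p.2 - 1) * (p.2 : ℝ) ^ (p.1 - 1)) /
          ((p.1 * p.2).choose (p.1 + p.2 - 1) : ℝ))
      (atTop ×ˢ atTop) (nhds 0) := by
  set q : ℝ := 5 / (2 * exp 1)
  have hq0 : 0 ≤ q := by positivity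
  have hq1 : q < 1 := by
    rw [div_lt_one (by positivity)]
    linarith [exp_one_gt_d9]
  have hlim : Tendsto (fun n : ℕ => exp 1 ^ 2 * ((n : ℝ) + 1) * q ^ n) atTop (nhds 0) := by
    convert ((tendsto_self_mul_const_pow_of_lt_one hq0 hq1).add
      (tendsto_pow_atTop_nhds_zero_of_lt_one hq0 hq1)).const_mul (exp 1 ^ 2) using 2
    · ring
    · simp
  have hsum : Tendsto (fun p : ℕ × ℕ => p.1 + p.2 - 2) (atTop ×ˢ atTop) atTop :=
    tendsto_atTop_mono (fun p => by simp only [Function.comp_apply]; omega)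
      ((tendsto_sub_atTop_nat 2).comp tendsto_fst)
  refine squeeze_zero' (Eventually.of_forall fun p => by positivity) ?_ (hlim.comp hsum)
  filter_upwards [(eventually_ge_atTop 5).prod_mk (eventually_ge_atTop 5)] with ⟨I, J⟩ ⟨hI, hJ⟩
  obtain ⟨a, rfl⟩ : ∃ a, I = a + 1 := ⟨I - 1, by omega⟩
  obtain ⟨b, rfl⟩ : ∃ b, J = b + 1 := ⟨J - 1, by omega⟩
  simp only [Function.comp, Nat.add_sub_cancel, show a + 1 + (b + 1) - 1 = a + b + 1 by omega,
    show a + 1 + (b + 1) - 2 = a + b by omega]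
  push_cast
  exact pow_mul_pow_div_choose_le (by omega) (by omega)

/-- The probability that a uniformly random finset of `Fin I × Fin J` with
`I + J - 1` points is a saturated fraction equals
`I^(J-1) · J^(I-1) / C(I·J, I+J-1)`, and this quantity tends to `0` as `I` and `J`
tend to infinity (along the product filter `atTop ×ˢ atTop`). -/
theorem prob_saturated_eq_and_tendsto_zero :
    (∀ I J : ℕ, 2 ≤ I → 2 ≤ J →
      (Nat.card {F : Finset (Fin I × Fin J) //
          F.card = I + J - 1 ∧
          LinearIndependent ℝ (fun p : F => modelRow p.1)} : ℝ) /
        (Nat.card {F : Finset (Fin I × Fin J) // F.card = I + J - 1} : ℝ) =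
      ((I : ℝ) ^ (J - 1) * (J : ℝ) ^ (I - 1)) / ((I * J).choose (I + J - 1) : ℝ)) ∧
    Tendsto (fun p : ℕ × ℕ =>
        ((p.1 : ℝ) ^ (p.2 - 1) * (p.2 : ℝ) ^ (p.1 - 1)) /
          ((p.1 * p.2).choose (p.1 + p.2 - 1) : ℝ))
      (atTop ×ˢ atTop) (nhds 0) := by
  refine ⟨fun I J hI hJ => ?_, tendsto_pow_mul_pow_div_choose⟩
  rw [natCard_saturated (by omega) (by omega), Nat.card_eq_fintype_card, Fintype.card_finset_len,
    Fintype.card_prod, Fintype.card_fin, Fintype.card_fin]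
end
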